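/- Let C be finitely complete and let a, a' : Γ → E be sections of p : E → Γ. If δ : Δ → Γ and e : I → Γ is the equalizer of a and a', then the pullback of e along δ is an equalizer of the pulled-back sections a[δ], a'[δ] : Δ → δ*(E) (the unique sections of the pullback of p along δ induced by a∘δ and a'∘δ). -/

import Mathlib

/-!
Both sides reduce to `(f ≫ δ) ≫ a = (f ≫ δ) ≫ a'`. On the left, the two maps into `δ*(E)` already
agree after `pullback.snd`, so they are equal iff they agree after `pullback.fst`. On the right,
the pullback of the mono `equalizer.ι a a'` is again mono, so a lift of `f` exists (and is then
unique) iff `f ≫ δ` factors through the equalizer.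
-/

open CategoryTheory CategoryTheory.Limits

namespace CategoryTheory.Limits

variable {C : Type*} [Category C]

theorem comp_pullback_lift_eq_iff {X Δ Γ E : C} {p : E ⟶ Γ} {δ : Δ ⟶ Γ} [HasPullback p δ]
    (f : X ⟶ Δ) {s s' : Δ ⟶ E} (hs : s ≫ p = 𝟙 Δ ≫ δ) (hs' : s' ≫ p = 𝟙 Δ ≫ δ) :
    f ≫ pullback.lift s (𝟙 Δ) hs = f ≫ pullback.lift s' (𝟙 Δ) hs' ↔ f ≫ s = f ≫ s' := by
  constructor
  · intro h
    simpa only [Category.assoc, pullback.lift_fst] using h =≫ pullback.fst p δ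
  · intro h
    ext <;> simp only [Category.assoc, pullback.lift_fst, pullback.lift_snd, h]

theorem existsUnique_comp_pullback_snd_eq_iff_of_mono {X Δ Γ I : C} (m : I ⟶ Γ) [Mono m] (δ : Δ ⟶ Γ)
    [HasPullback m δ] (f : X ⟶ Δ) :
    (∃! g : X ⟶ pullback m δ, g ≫ pullback.snd m δ = f) ↔ ∃ k : X ⟶ I, k ≫ m = f ≫ δ := by
  constructor
  · rintro ⟨g, hg, -⟩
    exact ⟨g ≫ pullback.fst m δ, by rw [Category.assoc, pullback.condition, reassoc_of% hg]⟩
  · rintro ⟨k, hk⟩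
    refine ⟨pullback.lift k f hk, pullback.lift_snd _ _ _, fun g hg => ?_⟩
    rw [← cancel_mono (pullback.snd m δ), hg, pullback.lift_snd]

theorem exists_comp_equalizer_ι_eq_iff {X Y Z : C} {u v : Y ⟶ Z} [HasEqualizer u v] (k : X ⟶ Y) :
    (∃ l : X ⟶ equalizer u v, l ≫ equalizer.ι u v = k) ↔ k ≫ u = k ≫ v := by
  constructor
  · rintro ⟨l, rfl⟩
    rw [Category.assoc, Category.assoc, equalizer.condition]
  · intro h
    exact ⟨equalizer.lift k h, equalizer.lift_ι k h⟩

end CategoryTheory.Limits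

/-- Stability of extensional identity types under substitution: given sections `a, a'` of
`p : E ⟶ Γ` and `δ : Δ ⟶ Γ`, the pullback along `δ` of the equalizer of `a` and `a'` is an
equalizer of the pulled-back sections `a[δ], a'[δ]` of the pullback of `p` along `δ`. -/
theorem pullback_of_equalizer_is_equalizer {C : Type*} [Category C] [HasFiniteLimits C]
    {Γ Δ E : C} (p : E ⟶ Γ) (a a' : Γ ⟶ E)
    (ha : a ≫ p = 𝟙 Γ) (ha' : a' ≫ p = 𝟙 Γ) (δ : Δ ⟶ Γ) :
    ∀ {X : C} (f : X ⟶ Δ),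
      f ≫ pullback.lift (f := p) (g := δ) (δ ≫ a) (𝟙 Δ) (by simp [ha]) =
          f ≫ pullback.lift (f := p) (g := δ) (δ ≫ a') (𝟙 Δ) (by simp [ha']) ↔
        ∃! g : X ⟶ pullback (equalizer.ι a a') δ,
          g ≫ pullback.snd (equalizer.ι a a') δ = f := by
  intro X f
  rw [comp_pullback_lift_eq_iff, existsUnique_comp_pullback_snd_eq_iff_of_mono,
    exists_comp_equalizer_ι_eq_iff, Category.assoc, Category.assoc]
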